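/- Let H be a complex Hilbert space, let Q_1, Q_2 be bounded positive self-adjoint operators on H, and let P be an orthogonal projection on H. Set Q_k' := P Q_k P (a bounded positive operator), and R_k := Q_k'(Q_k' + I)^{−1}. Then for every t ∈ [0,1], ‖ R_1^{t/2} R_2^{1−t} R_1^{t/2} ‖ ≤ (‖Q_1‖/(1+‖Q_1‖))^t · (‖Q_2‖/(1+‖Q_2‖))^{1−t} ≤ max{ ‖Q_1‖/(1+‖Q_1‖), ‖Q_2‖/(1+‖Q_2‖) } < 1, where the operator powers are defined via the continuous functional calculus of the positive contractions R_1, R_2. -/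
import Mathlib


open scoped Real

noncomputable section

variable {H : Type*} [NormedAddCommGroup H] [InnerProductSpace ℂ H] [CompleteSpace H]

/-- Real power `A^t` of a bounded operator, via the continuous functional calculus
(with the convention `0^t = 0` for `t > 0` and `A^0 = I` built into `Real.rpow`). -/
def opPow (A : H →L[ℂ] H) (t : ℝ) : H →L[ℂ] H := cfc (fun x : ℝ => x ^ t) A

/-- `R(P, Q) = (PQP)(PQP + I)⁻¹`. -/
def opR (P Q : H →L[ℂ] H) : H →L[ℂ] H :=
  (P * Q * P) * Ring.inverse (P * Q * P + 1)

private lemma aux_ratio_le {x c : ℝ} (hx : 0 ≤ x) (hc : x ≤ c) :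
    x * (x + 1)⁻¹ ≤ c / (1 + c) := by
  rw [← div_eq_mul_inv, div_le_div_iff₀ (by linarith) (by linarith)]
  nlinarith

private lemma opR_eq_cfc [Nontrivial H] (A : H →L[ℂ] H) (hA : 0 ≤ A) :
    A * Ring.inverse (A + 1) = cfc (fun x : ℝ => x * (x + 1)⁻¹) A := by
  have hsa : IsSelfAdjoint A := hA.isSelfAdjoint
  have hspec : ∀ x ∈ spectrum ℝ A, (0:ℝ) < x + 1 := fun x hx => by
    have := spectrum_nonneg_of_nonneg hA hx; linarith
  have hg : ContinuousOn (fun x : ℝ => (x + 1)⁻¹) (spectrum ℝ A) :=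
    ContinuousOn.inv₀ (by fun_prop) (fun x hx => (hspec x hx).ne')
  have h1 : cfc (fun x : ℝ => x + 1) A = A + 1 := by
    rw [cfc_add ..]
    · rw [cfc_id' ℝ A, cfc_const_one ℝ A]
  have hmul : (A + 1) * cfc (fun x : ℝ => (x + 1)⁻¹) A = 1 := by
    rw [← h1, ← cfc_mul _ _ A (by fun_prop) hg]
    calc cfc (fun x : ℝ => (x + 1) * (x + 1)⁻¹) A = cfc (fun _ : ℝ => (1:ℝ)) A :=
          cfc_congr fun x hx => mul_inv_cancel₀ (hspec x hx).ne'
      _ = 1 := cfc_const_one ℝ A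
  have hmul' : cfc (fun x : ℝ => (x + 1)⁻¹) A * (A + 1) = 1 := by
    rw [← h1, ← cfc_mul _ _ A hg (by fun_prop)]
    calc cfc (fun x : ℝ => (x + 1)⁻¹ * (x + 1)) A = cfc (fun _ : ℝ => (1:ℝ)) A :=
          cfc_congr fun x hx => inv_mul_cancel₀ (hspec x hx).ne'
      _ = 1 := cfc_const_one ℝ A
  have hinv : Ring.inverse (A + 1) = cfc (fun x : ℝ => (x + 1)⁻¹) A := by
    have : Ring.inverse ((⟨A + 1, _, hmul, hmul'⟩ : (H →L[ℂ] H)ˣ) : H →L[ℂ] H)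
        = cfc (fun x : ℝ => (x + 1)⁻¹) A := Ring.inverse_unit _
    exact this
  rw [hinv, cfc_mul (fun x : ℝ => x) (fun x : ℝ => (x + 1)⁻¹) A (by fun_prop) hg,
    cfc_id' ℝ A]

private lemma norm_opPow_opR_le [Nontrivial H] (Q P : H →L[ℂ] H)
    (hQ : 0 ≤ Q) (hP : IsSelfAdjoint P) (hP2 : P * P = P)
    (s : ℝ) (hs : 0 ≤ s) :
    ‖opPow (opR P Q) s‖ ≤ (‖Q‖ / (1 + ‖Q‖)) ^ s := by
  set A : H →L[ℂ] H := P * Q * P with hAdef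
  have hApos : 0 ≤ A := by
    have := star_left_conjugate_nonneg hQ P
    rwa [hP.star_eq] at this
  have hPle : ‖P‖ ≤ 1 := by
    have h := CStarRing.norm_star_mul_self (x := P)
    rw [hP.star_eq, hP2] at h
    nlinarith [norm_nonneg P]
  have hAle : ‖A‖ ≤ ‖Q‖ := by
    have h1 := norm_mul_le (P * Q) P
    have h2 := norm_mul_le P Q
    nlinarith [norm_nonneg Q, norm_nonneg P, norm_nonneg (P * Q)]
  have hf : ContinuousOn (fun x : ℝ => x * (x + 1)⁻¹) (spectrum ℝ A) := by
    refine ContinuousOn.mul (by fun_prop) (ContinuousOn.inv₀ (by fun_prop) fun x hx => ?_)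
    have := spectrum_nonneg_of_nonneg hApos hx; positivity
  have hR : opR P Q = cfc (fun x : ℝ => x * (x + 1)⁻¹) A := opR_eq_cfc A hApos
  have hspecR : ∀ y ∈ spectrum ℝ (opR P Q), 0 ≤ y ∧ y ≤ ‖Q‖ / (1 + ‖Q‖) := by
    intro y hy
    rw [hR, cfc_map_spectrum (fun x : ℝ => x * (x + 1)⁻¹) A hApos.isSelfAdjoint hf] at hy
    obtain ⟨x, hx, rfl⟩ := hy
    have hx0 : 0 ≤ x := spectrum_nonneg_of_nonneg hApos hx
    have hx1 : x ≤ ‖Q‖ := by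
      have := spectrum.norm_le_norm_of_mem hx
      rw [Real.norm_eq_abs, abs_of_nonneg hx0] at this
      linarith
    exact ⟨by positivity, aux_ratio_le hx0 hx1⟩
  have hRsa : IsSelfAdjoint (opR P Q) := by rw [hR]; exact cfc_predicate _ A
  refine norm_cfc_le (by positivity) fun y hy => ?_
  obtain ⟨hy0, hy1⟩ := hspecR y hy
  rw [Real.norm_eq_abs, abs_of_nonneg (Real.rpow_nonneg hy0 s)]
  exact Real.rpow_le_rpow hy0 hy1 hs

/-- For bounded positive operators `Q₁, Q₂` on a complex Hilbert space and an orthogonal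
projection `P`, setting `Qₖ' = P Qₖ P` and `Rₖ = Qₖ'(Qₖ' + I)⁻¹`, for every `t ∈ [0,1]`:
`‖R₁^{t/2} R₂^{1−t} R₁^{t/2}‖ ≤ (‖Q₁‖/(1+‖Q₁‖))^t (‖Q₂‖/(1+‖Q₂‖))^{1−t}
  ≤ max{‖Q₁‖/(1+‖Q₁‖), ‖Q₂‖/(1+‖Q₂‖)} < 1`. -/
theorem norm_W_lt_one (Q₁ Q₂ P : H →L[ℂ] H)
    (hQ₁ : 0 ≤ Q₁) (hQ₂ : 0 ≤ Q₂)
    (hP : IsSelfAdjoint P) (hP2 : P * P = P)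
    (t : ℝ) (ht : t ∈ Set.Icc (0 : ℝ) 1) :
    ‖opPow (opR P Q₁) (t / 2) * opPow (opR P Q₂) (1 - t) * opPow (opR P Q₁) (t / 2)‖ ≤
        (‖Q₁‖ / (1 + ‖Q₁‖)) ^ t * (‖Q₂‖ / (1 + ‖Q₂‖)) ^ (1 - t) ∧
      (‖Q₁‖ / (1 + ‖Q₁‖)) ^ t * (‖Q₂‖ / (1 + ‖Q₂‖)) ^ (1 - t) ≤
        max (‖Q₁‖ / (1 + ‖Q₁‖)) (‖Q₂‖ / (1 + ‖Q₂‖)) ∧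
      max (‖Q₁‖ / (1 + ‖Q₁‖)) (‖Q₂‖ / (1 + ‖Q₂‖)) < 1 := by
  obtain ⟨ht0, ht1⟩ := ht
  set a₁ : ℝ := ‖Q₁‖ / (1 + ‖Q₁‖) with ha₁
  set a₂ : ℝ := ‖Q₂‖ / (1 + ‖Q₂‖) with ha₂
  have ha₁0 : 0 ≤ a₁ := by positivity
  have ha₂0 : 0 ≤ a₂ := by positivity
  have ha₁1 : a₁ < 1 := by
    rw [ha₁, div_lt_one (by positivity)]; linarith [norm_nonneg Q₁]
  have ha₂1 : a₂ < 1 := by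
    rw [ha₂, div_lt_one (by positivity)]; linarith [norm_nonneg Q₂]
  have hm0 : 0 ≤ max a₁ a₂ := le_trans ha₁0 (le_max_left _ _)
  refine ⟨?_, ?_, max_lt ha₁1 ha₂1⟩
  · obtain hsub | hnt := subsingleton_or_nontrivial H
    · have h0 : ∀ f : H →L[ℂ] H, f = 0 := fun f =>
        ContinuousLinearMap.ext fun x => Subsingleton.elim _ _
      rw [h0 (opPow (opR P Q₁) (t / 2) * opPow (opR P Q₂) (1 - t) * opPow (opR P Q₁) (t / 2)),
        norm_zero]
      positivity
    · have b₁ := norm_opPow_opR_le Q₁ P hQ₁ hP hP2 (t / 2) (by linarith)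
      have b₂ := norm_opPow_opR_le Q₂ P hQ₂ hP hP2 (1 - t) (by linarith)
      have key : a₁ ^ (t / 2) * a₂ ^ (1 - t) * a₁ ^ (t / 2) = a₁ ^ t * a₂ ^ (1 - t) := by
        rcases eq_or_lt_of_le ht0 with h | h
        · rw [← h]; norm_num
        · have : a₁ ^ (t / 2) * a₁ ^ (t / 2) = a₁ ^ t := by
            rw [← Real.rpow_add' ha₁0 (by rw [show t / 2 + t / 2 = t from by ring]; exact h.ne'),
              show t / 2 + t / 2 = t from by ring]
          rw [mul_right_comm, this]
      calc ‖opPow (opR P Q₁) (t / 2) * opPow (opR P Q₂) (1 - t) * opPow (opR P Q₁) (t / 2)‖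
          ≤ ‖opPow (opR P Q₁) (t / 2)‖ * ‖opPow (opR P Q₂) (1 - t)‖ *
              ‖opPow (opR P Q₁) (t / 2)‖ := by
            calc ‖opPow (opR P Q₁) (t / 2) * opPow (opR P Q₂) (1 - t) *
                  opPow (opR P Q₁) (t / 2)‖
                ≤ ‖opPow (opR P Q₁) (t / 2) * opPow (opR P Q₂) (1 - t)‖ *
                    ‖opPow (opR P Q₁) (t / 2)‖ := norm_mul_le _ _
              _ ≤ ‖opPow (opR P Q₁) (t / 2)‖ * ‖opPow (opR P Q₂) (1 - t)‖ *
                    ‖opPow (opR P Q₁) (t / 2)‖ := by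
                  gcongr
                  exact norm_mul_le _ _
        _ ≤ a₁ ^ (t / 2) * a₂ ^ (1 - t) * a₁ ^ (t / 2) := by
            gcongr <;> first | positivity | assumption
        _ = a₁ ^ t * a₂ ^ (1 - t) := key
  · calc a₁ ^ t * a₂ ^ (1 - t)
        ≤ (max a₁ a₂) ^ t * (max a₁ a₂) ^ (1 - t) := by
          gcongr <;>
            first | linarith | exact le_max_left _ _ | exact le_max_right _ _
      _ = (max a₁ a₂) ^ (t + (1 - t)) :=
          (Real.rpow_add' hm0 (by norm_num)).symm
      _ = max a₁ a₂ := by norm_num
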